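/- Suppose E ⊆ ℕ × ℕ and χ_E(i,j) = ⟨x_i, y_j⟩ for families of vectors in a Hilbert space with ‖x_i‖·‖y_j‖ < 2/√3 for all i, j. Then E has the 3 of 4 property: whenever i₁ ≠ i₂, j₁ ≠ j₂ and three of the four values ⟨x_{i_a}, y_{j_b}⟩ equal 1, the fourth equals 1 as well. -/

import Mathlib

/-!
Pairing `u₁ + u₂` with `v₁` and `2u₁ - u₂` with `v₂` both give `2`, so Cauchy–Schwarz yields two
lower bounds on `‖v₁‖²` and `‖v₂‖²` involving `re ⟪u₁, u₂⟫` with opposite signs. Eliminating it gives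
`4 (2‖v₂‖² + ‖v₁‖²) ≤ 3 m² (2‖v₂‖² + ‖v₁‖²)` with `m = max (‖u₁‖‖v₁‖) (‖u₂‖‖v₂‖)`, i.e. `m ≥ 2/√3`:
the Schur multiplier norm of `[[1, 1], [1, 0]]`. A failure of the 3 of 4 property inside a Gram
factorisation of `χ_E` produces exactly this pattern.
-/

/-- The "3 of 4 property". -/
def ThreeOfFour {X Y : Type*} (E : Set (X × Y)) : Prop :=
  ∀ ⦃x₁ x₂ : X⦄ ⦃y₁ y₂ : Y⦄, x₁ ≠ x₂ → y₁ ≠ y₂ →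
    (((x₁, y₁) ∈ E ∧ (x₁, y₂) ∈ E ∧ (x₂, y₁) ∈ E) → (x₂, y₂) ∈ E) ∧
    (((x₁, y₁) ∈ E ∧ (x₁, y₂) ∈ E ∧ (x₂, y₂) ∈ E) → (x₂, y₁) ∈ E) ∧
    (((x₁, y₁) ∈ E ∧ (x₂, y₁) ∈ E ∧ (x₂, y₂) ∈ E) → (x₁, y₂) ∈ E) ∧
    (((x₁, y₂) ∈ E ∧ (x₂, y₁) ∈ E ∧ (x₂, y₂) ∈ E) → (x₁, y₁) ∈ E)

open Classical in
/-- The characteristic function `χ_E` of a set `E ⊆ ℕ × ℕ`. -/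
noncomputable def chi (E : Set (ℕ × ℕ)) (i j : ℕ) : ℂ := if (i, j) ∈ E then 1 else 0

theorem threeOfFour_of_forall_mem {X Y : Type*} {E : Set (X × Y)}
    (h : ∀ x₁ x₂ y₁ y₂, (x₁, y₁) ∈ E → (x₁, y₂) ∈ E → (x₂, y₁) ∈ E → (x₂, y₂) ∈ E) :
    ThreeOfFour E :=
  fun x₁ x₂ y₁ y₂ _ _ ↦
    ⟨fun ⟨h₁₁, h₁₂, h₂₁⟩ ↦ h x₁ x₂ y₁ y₂ h₁₁ h₁₂ h₂₁,
     fun ⟨h₁₁, h₁₂, h₂₂⟩ ↦ h x₁ x₂ y₂ y₁ h₁₂ h₁₁ h₂₂,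
     fun ⟨h₁₁, h₂₁, h₂₂⟩ ↦ h x₂ x₁ y₁ y₂ h₂₁ h₂₂ h₁₁,
     fun ⟨h₁₂, h₂₁, h₂₂⟩ ↦ h x₂ x₁ y₂ y₁ h₂₂ h₂₁ h₁₂⟩

section SchurBound

open RCLike

variable {𝕜 F : Type*} [RCLike 𝕜] [NormedAddCommGroup F] [InnerProductSpace 𝕜 F]

local notation "⟪" x ", " y "⟫" => inner 𝕜 x y

theorem sq_norm_inner_le (u v : F) : ‖⟪u, v⟫‖ ^ 2 ≤ ‖u‖ ^ 2 * ‖v‖ ^ 2 := by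
  rw [← mul_pow]
  exact pow_le_pow_left₀ (norm_nonneg _) (norm_inner_le_norm u v) 2

theorem norm_two_smul_sub_sq (u₁ u₂ : F) :
    ‖(2 : 𝕜) • u₁ - u₂‖ ^ 2 = 4 * ‖u₁‖ ^ 2 - 4 * re ⟪u₁, u₂⟫ + ‖u₂‖ ^ 2 := by
  rw [@norm_sub_sq 𝕜, inner_smul_left, norm_smul, conj_ofNat, ofNat_mul_re, norm_ofNat]
  ring

theorem two_div_sqrt_three_le_max_norm_mul_norm {u₁ u₂ v₁ v₂ : F}
    (h₁₁ : ⟪u₁, v₁⟫ = 1) (h₁₂ : ⟪u₁, v₂⟫ = 1) (h₂₁ : ⟪u₂, v₁⟫ = 1) (h₂₂ : ⟪u₂, v₂⟫ = 0) :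
    2 / √3 ≤ max (‖u₁‖ * ‖v₁‖) (‖u₂‖ * ‖v₂‖) := by
  set m := max (‖u₁‖ * ‖v₁‖) (‖u₂‖ * ‖v₂‖)
  have hp : ‖u₁‖ ^ 2 * ‖v₁‖ ^ 2 ≤ m ^ 2 := by
    rw [← mul_pow]; exact pow_le_pow_left₀ (by positivity) (le_max_left _ _) 2
  have hq : ‖u₂‖ ^ 2 * ‖v₂‖ ^ 2 ≤ m ^ 2 := by
    rw [← mul_pow]; exact pow_le_pow_left₀ (by positivity) (le_max_right _ _) 2
  have cs₁ := sq_norm_inner_le (𝕜 := 𝕜) (u₁ + u₂) v₁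
  rw [inner_add_left, h₁₁, h₂₁] at cs₁
  have cs₂ := sq_norm_inner_le (𝕜 := 𝕜) ((2 : 𝕜) • u₁ - u₂) v₂
  rw [inner_sub_left, inner_smul_left, h₁₂, h₂₂, norm_two_smul_sub_sq] at cs₂
  norm_num at cs₁ cs₂
  rw [@norm_add_sq 𝕜] at cs₁
  have hc : 0 < ‖v₁‖ ^ 2 := by
    have : v₁ ≠ 0 := fun h ↦ by simp [h] at h₁₁
    positivity
  have hd : 0 ≤ ‖v₂‖ ^ 2 := by positivity
  -- `2‖v₂‖² · cs₁ + ‖v₁‖² · cs₂` eliminates `re ⟪u₁, u₂⟫`.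
  have key : 4 / 3 * (2 * ‖v₂‖ ^ 2 + ‖v₁‖ ^ 2) ≤ m ^ 2 * (2 * ‖v₂‖ ^ 2 + ‖v₁‖ ^ 2) := by
    nlinarith [mul_le_mul_of_nonneg_right cs₁ hd, mul_le_mul_of_nonneg_right cs₂ hc.le,
      mul_le_mul_of_nonneg_right hp hd, mul_le_mul_of_nonneg_right hq hc.le]
  have hm : 4 / 3 ≤ m ^ 2 := le_of_mul_le_mul_right key (by positivity)
  refine le_of_pow_le_pow_left₀ two_ne_zero (le_max_of_le_left (by positivity)) ?_
  rw [div_pow, Real.sq_sqrt zero_le_three]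
  linarith

end SchurBound

/-- If `χ_E(i,j) = ⟨x_i, y_j⟩` with `‖x_i‖·‖y_j‖ < 2/√3` for all `i, j`, then `E` has
the 3 of 4 property. -/
theorem gram_factorization_three_of_four {K : Type*} [NormedAddCommGroup K]
    [InnerProductSpace ℂ K] (E : Set (ℕ × ℕ)) (x y : ℕ → K)
    (hfact : ∀ i j, (inner ℂ (x i) (y j) : ℂ) = chi E i j)
    (hbound : ∀ i j, ‖x i‖ * ‖y j‖ < 2 / Real.sqrt 3) :
    ThreeOfFour E := by
  refine threeOfFour_of_forall_mem fun i₁ i₂ j₁ j₂ h₁₁ h₁₂ h₂₁ ↦ ?_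
  by_contra h₂₂
  have hE {i j} (h : (i, j) ∈ E) : inner ℂ (x i) (y j) = 1 := by simp [hfact, chi, h]
  have hbig := two_div_sqrt_three_le_max_norm_mul_norm (hE h₁₁) (hE h₁₂) (hE h₂₁)
    (by simp [hfact, chi, h₂₂])
  exact hbig.not_gt (max_lt (hbound _ _) (hbound _ _))
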